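/- arXiv:2303.01824 — 6 statements merged into one kernel-verified Lean document; each statement's English description precedes it below -/
import Mathlib

section
/- When meeting rates do not depend on market shares, the sensitivity of the equilibrium market share to preferences is at most one: for all μ ≥ 0 and λ_A, λ_B > 0, the coefficient ∂s_A/∂p_a = λ_A·λ_B·(2μ+λ_tot)/(λ_tot·(μ+λ_A)·(μ+λ_B)) satisfies λ_A·λ_B·(2μ+λ_A+λ_B) ≤ (λ_A+λ_B)·(μ+λ_A)·(μ+λ_B), with equality if and only if μ = 0. -/
theorem preference_slope_gap_eq (μ a b : ℝ) :
    (a + b) * (μ + a) * (μ + b) - a * b * (2 * μ + a + b) = μ * ((a + b) * μ + a ^ 2 + b ^ 2) := by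
  ring

/-- When meeting rates do not depend on market shares, the sensitivity of the
equilibrium market share to preferences is at most one:
`λ_A λ_B (2μ + λ_A + λ_B) ≤ (λ_A+λ_B)(μ+λ_A)(μ+λ_B)`, with equality iff `μ = 0`. -/
theorem preference_slope_at_most_one (μ lamA lamB : ℝ)
    (hμ : 0 ≤ μ) (hlamA : 0 < lamA) (hlamB : 0 < lamB) :
    lamA * lamB * (2 * μ + lamA + lamB) ≤ (lamA + lamB) * (μ + lamA) * (μ + lamB) ∧
    (lamA * lamB * (2 * μ + lamA + lamB) = (lamA + lamB) * (μ + lamA) * (μ + lamB)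
      ↔ μ = 0) := by
  have hgap := preference_slope_gap_eq μ lamA lamB
  have hfactor : 0 < (lamA + lamB) * μ + lamA ^ 2 + lamB ^ 2 := by positivity
  constructor
  · rw [← sub_nonneg, hgap]
    exact mul_nonneg hμ hfactor.le
  · rw [eq_comm, ← sub_eq_zero, hgap, mul_eq_zero_iff_right hfactor.ne']
end

section
/- When meeting rates are proportional to market shares, the interior equilibrium share is s_A = p_a(2r_f+1) − r_f, and frictions advantage the most preferred firm. Precisely: let μ, λ_tot > 0, r_f = μ/λ_tot, and p_a ∈ (r_f/(2r_f+1), (r_f+1)/(2r_f+1)). Then s := p_a(2r_f+1) − r_f lies in (0,1) and satisfies the equilibrium equation s = (λ_tot·s/(μ+λ_tot·(1−s)))·(μ/λ_tot) + p_a·λ_tot²·s·(1−s)·(2μ+λ_tot)/(λ_tot·(μ+λ_tot·s)·(μ+λ_tot·(1−s))), obtained by substituting λ_A = λ_tot·s and λ_B = λ_tot·(1−s). Moreover s − p_a = r_f(2p_a − 1), so s ≥ p_a whenever p_a ≥ 1/2, with strict inequality if p_a > 1/2 and r_f > 0. -/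
/-!
Write `a = μ + λ s` and `b = μ + λ (1 - s)`, so that `a + b = 2μ + λ`. The choice
`s = p_a (2 r_f + 1) - r_f` is exactly the condition `p_a (a + b) = a`, under which the
preference term of Equation (1) collapses to `λ s (1 - s) / b`; adding the friction term
`s μ / b` gives `s (μ + λ (1 - s)) / b = s`. The advantage of the preferred firm is the
identity `s - p_a = r_f (2 p_a - 1)`.
-/

open Set

/-- The right-hand side of Equation (1) under balanced matching `λ_A = λ s`, `λ_B = λ (1 - s)`. -/
noncomputable def balancedShareMap (μ lam pa s : ℝ) : ℝ :=
  (lam * s / (μ + lam * (1 - s))) * (μ / lam) +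
    pa * (lam ^ 2 * s * (1 - s) * (2 * μ + lam) /
      (lam * (μ + lam * s) * (μ + lam * (1 - s))))

theorem balancedShareMap_eq_self {μ lam pa s : ℝ} (hlam : lam ≠ 0)
    (hA : μ + lam * s ≠ 0) (hB : μ + lam * (1 - s) ≠ 0)
    (hpa : pa * (2 * μ + lam) = μ + lam * s) :
    balancedShareMap μ lam pa s = s := by
  calc balancedShareMap μ lam pa s
      = (s * μ + pa * (2 * μ + lam) * (lam * s * (1 - s)) / (μ + lam * s)) /
          (μ + lam * (1 - s)) := by
        unfold balancedShareMap
        field_simp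
    _ = s := by
        rw [hpa, mul_div_cancel_left₀ _ hA, div_eq_iff hB]
        ring

theorem mul_two_mul_add_one_sub_mem_Ioo {r p : ℝ} (hr : 0 < 2 * r + 1)
    (hp : p ∈ Ioo (r / (2 * r + 1)) ((r + 1) / (2 * r + 1))) :
    p * (2 * r + 1) - r ∈ Ioo (0 : ℝ) 1 := by
  obtain ⟨hlo, hhi⟩ := hp
  rw [div_lt_iff₀ hr] at hlo
  rw [lt_div_iff₀ hr] at hhi
  constructor <;> linarith

theorem preference_eq_of_share_eq {μ lam pa s : ℝ} (hlam : lam ≠ 0)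
    (hs : s = pa * (2 * (μ / lam) + 1) - μ / lam) :
    pa * (2 * μ + lam) = μ + lam * s := by
  subst hs
  field_simp
  ring

/-- Balanced matching: the interior equilibrium share is
`s = p_a (2 r_f + 1) - r_f`, it lies in `(0,1)`, satisfies the equilibrium
equation obtained from Equation (1) with `λ_A = λ_tot s` and `λ_B = λ_tot (1-s)`,
and frictions advantage the most preferred firm. -/
theorem balanced_matching_interior_share (μ lamtot pa rf : ℝ)
    (hμ : 0 < μ) (hlamtot : 0 < lamtot) (hrf : rf = μ / lamtot)
    (hpa : pa ∈ Set.Ioo (rf / (2 * rf + 1)) ((rf + 1) / (2 * rf + 1))) :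
    let s := pa * (2 * rf + 1) - rf
    s ∈ Set.Ioo (0:ℝ) 1 ∧
    s = (lamtot * s / (μ + lamtot * (1 - s))) * (μ / lamtot) +
        pa * (lamtot ^ 2 * s * (1 - s) * (2 * μ + lamtot) /
          (lamtot * (μ + lamtot * s) * (μ + lamtot * (1 - s)))) ∧
    s - pa = rf * (2 * pa - 1) ∧
    (1/2 ≤ pa → pa ≤ s) ∧
    (1/2 < pa → 0 < rf → pa < s) := by
  intro s
  have hrf_pos : 0 < rf := hrf ▸ div_pos hμ hlamtot
  obtain ⟨hs0, hs1⟩ : s ∈ Ioo (0 : ℝ) 1 :=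
    mul_two_mul_add_one_sub_mem_Ioo (by linarith) hpa
  have hgap : s - pa = rf * (2 * pa - 1) := by ring
  refine ⟨⟨hs0, hs1⟩, ?_, hgap, fun hpa_half => ?_, fun hpa_half _ => ?_⟩
  · refine (balancedShareMap_eq_self hlamtot.ne' ?_ ?_ ?_).symm
    · positivity
    · have : 0 < 1 - s := by linarith
      positivity
    · exact preference_eq_of_share_eq hlamtot.ne' (by simp only [s, hrf])
  · linarith [mul_nonneg hrf_pos.le (by linarith : (0 : ℝ) ≤ 2 * pa - 1)]
  · linarith [mul_pos hrf_pos (by linarith : (0 : ℝ) < 2 * pa - 1)]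
end

section
/- When frictions are negligible, the size of each firm converges to the mass of agents that prefer it, even with non-constant meeting rates: let λ : [0,1] → ℝ be continuous and strictly positive with ∫₀¹ λ = 1 (viewed as a function on the circle, so λ(0) = λ(1)), let ℓ : [0,1] → ℝ be continuous and nonnegative on the circle, and for r > 0 and y ∈ [0,1] define s_r(y) = λ(y)·∫₀¹ r(r+1)·ℓ(x)/(r + L(x,y))² dx, where L(x,y) = ∫₀¹ λ(y')·1[d(x,y') < d(x,y)] dy' and d is the circle distance d(x,y) = min_{k∈ℤ} |x − y + k|. Then for every y, s_r(y) → ℓ(y) as r → 0⁺. -/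
open MeasureTheory

/-- Distance on the circle of circumference 1: `d(x,y) = min_{k ∈ ℤ} |x - y + k|`. -/
noncomputable def circleDist (x y : ℝ) : ℝ :=
  sInf {v : ℝ | ∃ k : ℤ, v = |x - y + (k : ℝ)|}

/-! On `ℝ ⧸ ℤ`, where `circleDist` is the quotient metric, the firms that `x` prefers to `y` form
the ball of radius `d(x,y)` about `x`, which lies within `2 d(x,y)` of `y`. Hence `L(x,y)` is
squeezed between `2 a d(x,y)` and `2 b d(x,y)` whenever `λ ∈ [a, b]` near `y`, and
`L(x,y) ≥ 2 (min λ) d(x,y)` everywhere. As `r → 0` the kernel `r (r + 1) / (r + L)²` concentrates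
at `x = y`: `∫ r (r + 1) / (r + 2 A d(x,y))² dx = (r + 1) / (r + A) → 1 / A`, while its mass away
from `y` vanishes. With `A = λ(y) ± ε` this pins `s_r(y)` between `λ(y) (ℓ(y) ∓ ε) / (λ(y) ± ε)`
up to `o(1)`, and letting `ε → 0` gives `ℓ(y)`. -/

open Set Filter Topology Metric

lemma tendsto_of_eventually_mem_Icc {α ι β : Type*} [LinearOrder β] [TopologicalSpace β]
    [OrderTopology β] {l : Filter α} {l' : Filter ι} [l'.NeBot] {f : α → β} {φ ψ : ι → β} {c : β}
    (hφ : Tendsto φ l' (𝓝 c)) (hψ : Tendsto ψ l' (𝓝 c))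
    (h : ∀ᶠ ε in l', ∀ᶠ x in l, f x ∈ Icc (ψ ε) (φ ε)) : Tendsto f l (𝓝 c) := by
  rw [tendsto_order]
  refine ⟨fun a ha => ?_, fun a ha => ?_⟩
  · obtain ⟨ε, hε, hf⟩ := ((hψ.eventually (lt_mem_nhds ha)).and h).exists
    exact hf.mono fun x hx => hε.trans_le hx.1
  · obtain ⟨ε, hε, hf⟩ := ((hφ.eventually (gt_mem_nhds ha)).and h).exists
    exact hf.mono fun x hx => hx.2.trans_lt hε

lemma circleDist_eq_dist (x y : ℝ) : circleDist x y = dist (x : UnitAddCircle) y := by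
  have hleast : IsLeast {v : ℝ | ∃ k : ℤ, v = |x - y + k|} |x - y - round (x - y)| :=
    ⟨⟨-round (x - y), by push_cast; ring_nf⟩, by
      rintro v ⟨k, rfl⟩
      simpa using round_le (x - y) (-k)⟩
  rw [circleDist, hleast.csInf_eq, dist_eq_norm, ← AddCircle.coe_sub, UnitAddCircle.norm_eq]

lemma AddCircle.liftIoc_coe_of_mem_Icc {T a : ℝ} [Fact (0 < T)] {f : ℝ → ℝ}
    (hf : f a = f (a + T)) {x : ℝ} (hx : x ∈ Icc a (a + T)) :
    AddCircle.liftIoc T a f x = f x := by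
  rcases eq_or_lt_of_le hx.1 with rfl | hax
  · rw [← AddCircle.coe_add_period,
      AddCircle.liftIoc_coe_apply ⟨by linarith [Fact.out (p := 0 < T)], le_rfl⟩, hf]
  · exact AddCircle.liftIoc_coe_apply ⟨hax, hx.2⟩

lemma AddCircle.liftIoc_mem {T a : ℝ} [Fact (0 < T)] {β : Type*} {f : ℝ → β} {s : Set β}
    (hf : MapsTo f (Ioc a (a + T)) s) (z : AddCircle T) : AddCircle.liftIoc T a f z ∈ s :=
  hf (AddCircle.equivIoc T a z).2

lemma AddCircle.volume_real_ball {T : ℝ} [Fact (0 < T)] (x : AddCircle T) {d : ℝ}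
    (hd : 0 ≤ d) (hdT : 2 * d ≤ T) : volume.real (ball x d) = 2 * d := by
  rw [measureReal_def, ← measure_congr AddCircle.closedBall_ae_eq_ball,
    AddCircle.volume_closedBall, min_eq_right hdT, ENNReal.toReal_ofReal (by linarith)]

instance : IsProbabilityMeasure (volume : Measure UnitAddCircle) := ⟨UnitAddCircle.measure_univ⟩

lemma UnitAddCircle.volume_real_ball_dist (x y : UnitAddCircle) :
    volume.real (ball x (dist x y)) = 2 * dist x y := by
  refine AddCircle.volume_real_ball x dist_nonneg ?_
  have := AddCircle.norm_le_half_period (x := x - y) (p := 1) one_ne_zero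
  rw [dist_eq_norm]
  norm_num at this ⊢
  linarith

lemma UnitAddCircle.integrable_of_continuous {f : UnitAddCircle → ℝ} (hf : Continuous f) :
    Integrable f :=
  hf.integrable_of_hasCompactSupport (.of_compactSpace f)

lemma intervalIntegral_eq_integral_unitAddCircle {f : ℝ → ℝ} {F : UnitAddCircle → ℝ}
    (h : ∀ u ∈ Ioc (0:ℝ) 1, f u = F u) : ∫ u in (0:ℝ)..1, f u = ∫ z, F z := by
  have := UnitAddCircle.intervalIntegral_preimage 0 F
  rw [zero_add] at this
  rw [← this]
  refine intervalIntegral.integral_congr_ae (.of_forall fun u hu => h u ?_)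
  rwa [uIoc_of_le zero_le_one] at hu

lemma intervalIntegral_comp_abs {f : ℝ → ℝ} {a : ℝ} (ha : 0 ≤ a)
    (hf : ContinuousOn f (Icc 0 a)) :
    ∫ t in -a..a, f |t| = 2 * ∫ t in (0:ℝ)..a, f t := by
  have hfabs : ContinuousOn (fun t => f |t|) (Icc (-a) a) :=
    hf.comp continuous_abs.continuousOn fun t ht => ⟨abs_nonneg t, abs_le.mpr ht⟩
  have hpos : ∫ t in (0:ℝ)..a, f |t| = ∫ t in (0:ℝ)..a, f t :=
    intervalIntegral.integral_congr fun t ht => by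
      rw [uIcc_of_le ha] at ht
      simp only [abs_of_nonneg ht.1]
  have hneg : ∫ t in -a..0, f |t| = ∫ t in (0:ℝ)..a, f |t| := by
    simpa using (intervalIntegral.integral_comp_neg (a := 0) (b := a) (fun t => f |t|)).symm
  rw [← intervalIntegral.integral_add_adjacent_intervals (b := 0)
    ((hfabs.mono (Icc_subset_Icc le_rfl ha)).intervalIntegrable_of_Icc (by linarith))
    ((hfabs.mono (Icc_subset_Icc (by linarith) le_rfl)).intervalIntegrable_of_Icc ha),
    hneg, hpos]
  ring

lemma UnitAddCircle.integral_comp_dist {g : ℝ → ℝ} (hg : ContinuousOn g (Icc 0 (1 / 2)))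
    (y : UnitAddCircle) : ∫ x, g (dist x y) = 2 * ∫ t in (0:ℝ)..1 / 2, g t := by
  have hcoe : ∫ t in -(1 / 2 : ℝ)..1 / 2, g ‖(t : UnitAddCircle)‖ =
      ∫ t in -(1 / 2 : ℝ)..1 / 2, g |t| :=
    intervalIntegral.integral_congr fun t ht => by
      rw [uIcc_of_le (by norm_num)] at ht
      rw [(AddCircle.norm_coe_eq_abs_iff (p := 1) one_ne_zero).mpr (by simpa [abs_le] using ht)]
  simp_rw [dist_eq_norm]
  rw [integral_sub_right_eq_self (fun x => g ‖x‖) y,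
    ← UnitAddCircle.intervalIntegral_preimage (-(1 / 2)),
    show -(1 / 2 : ℝ) + 1 = 1 / 2 by norm_num, hcoe, intervalIntegral_comp_abs (by norm_num) hg]

noncomputable def frictionKernel (r m : ℝ) : ℝ := r * (r + 1) / (r + m) ^ 2

lemma frictionKernel_nonneg {r : ℝ} (hr : 0 ≤ r) (m : ℝ) : 0 ≤ frictionKernel r m := by
  unfold frictionKernel; positivity

lemma frictionKernel_le_frictionKernel {r m m' : ℝ} (hr : 0 < r) (hm : 0 ≤ m) (hmm' : m ≤ m') :
    frictionKernel r m' ≤ frictionKernel r m := by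
  unfold frictionKernel
  gcongr

lemma continuousOn_frictionKernel {r : ℝ} (hr : 0 < r) :
    ContinuousOn (frictionKernel r) (Ici 0) :=
  continuousOn_const.div (by fun_prop) fun m (hm : 0 ≤ m) => by positivity

lemma continuous_frictionKernel_comp {X : Type*} [TopologicalSpace X] {r : ℝ} (hr : 0 < r)
    {f : X → ℝ} (hf : Continuous f) (hf0 : ∀ x, 0 ≤ f x) : Continuous fun x => frictionKernel r (f x) :=
  (continuousOn_frictionKernel hr).comp_continuous hf hf0

lemma measurable_frictionKernel (r : ℝ) : Measurable (frictionKernel r) := by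
  unfold frictionKernel; fun_prop

lemma tendsto_frictionKernel_zero {m : ℝ} (hm : 0 < m) :
    Tendsto (fun r => frictionKernel r m) (𝓝 0) (𝓝 0) := by
  have : ContinuousAt (fun r => frictionKernel r m) 0 := by
    unfold frictionKernel; fun_prop (disch := simp [hm.ne'])
  simpa [frictionKernel] using this.tendsto

lemma tendsto_mul_div_add_mul_frictionKernel {A m : ℝ} (hA : A ≠ 0) (hm : 0 < m) (P Q : ℝ) :
    Tendsto (fun r => P * (r + 1) / (r + A) + Q * frictionKernel r m) (𝓝 0) (𝓝 (P / A)) := by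
  have hcont : ContinuousAt (fun r => P * (r + 1) / (r + A)) 0 := by
    fun_prop (disch := simpa using hA)
  simpa using hcont.tendsto.add ((tendsto_frictionKernel_zero hm).const_mul Q)

lemma integral_frictionKernel {r A : ℝ} (hr : 0 < r) (hA : 0 < A) :
    ∫ t in (0:ℝ)..1 / 2, frictionKernel r (2 * A * t) = (r + 1) / (2 * (r + A)) := by
  have hderiv : ∀ t ∈ uIcc (0:ℝ) (1 / 2),
      HasDerivAt (fun u => -(r * (r + 1) / (2 * A)) * (r + 2 * A * u)⁻¹)
        (frictionKernel r (2 * A * t)) t := by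
    intro t ht
    rw [uIcc_of_le (by norm_num)] at ht
    have hpos : 0 < r + 2 * A * t := by nlinarith [ht.1]
    refine ((((hasDerivAt_id' t).const_mul (2 * A)).const_add r).inv hpos.ne').const_mul
      (-(r * (r + 1) / (2 * A))) |>.congr_deriv ?_
    unfold frictionKernel
    field_simp
  rw [intervalIntegral.integral_eq_sub_of_hasDerivAt hderiv
    (ContinuousOn.intervalIntegrable ((continuousOn_frictionKernel hr).comp (by fun_prop)
      fun t ht => by rw [uIcc_of_le (by norm_num)] at ht; simp only [mem_Ici]; nlinarith [ht.1]))]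
  field_simp
  ring

lemma integral_frictionKernel_dist {r A : ℝ} (hr : 0 < r) (hA : 0 < A) (y : UnitAddCircle) :
    ∫ x, frictionKernel r (2 * A * dist x y) = (r + 1) / (r + A) := by
  rw [UnitAddCircle.integral_comp_dist (g := fun t => frictionKernel r (2 * A * t))
    ((continuousOn_frictionKernel hr).comp (by fun_prop) fun t ht => by
      simp only [mem_Ici]; nlinarith [ht.1]), integral_frictionKernel hr hA]
  field_simp

/-- `L(x, y)` of the paper: the `Λ`-mass of the firms that agent `x` strictly prefers to `y`. -/
noncomputable def preferredMass (Λ : UnitAddCircle → ℝ) (x y : UnitAddCircle) : ℝ :=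
  ∫ z in ball x (dist x y), Λ z

section preferredMass

variable {Λ : UnitAddCircle → ℝ} {x y : UnitAddCircle} {a : ℝ}

lemma le_preferredMass (hΛ : Integrable Λ) (ha : ∀ z ∈ ball x (dist x y), a ≤ Λ z) :
    2 * a * dist x y ≤ preferredMass Λ x y := by
  have := setIntegral_ge_of_const_le_real measurableSet_ball (measure_ne_top _ _) ha
    hΛ.integrableOn
  rw [UnitAddCircle.volume_real_ball_dist] at this
  rw [preferredMass]
  linarith

lemma preferredMass_le (hΛ : Integrable Λ) (ha : ∀ z ∈ ball x (dist x y), Λ z ≤ a) :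
    preferredMass Λ x y ≤ 2 * a * dist x y := by
  have := setIntegral_mono_on hΛ.integrableOn (integrableOn_const (measure_ne_top _ _))
    measurableSet_ball ha
  rw [setIntegral_const, UnitAddCircle.volume_real_ball_dist, smul_eq_mul] at this
  rw [preferredMass]
  linarith

lemma stronglyMeasurable_preferredMass (hΛ : StronglyMeasurable Λ) (y : UnitAddCircle) :
    StronglyMeasurable fun x => preferredMass Λ x y := by
  set S := {p : UnitAddCircle × UnitAddCircle | dist p.2 p.1 < dist p.1 y}
  have hS : MeasurableSet S := (isOpen_lt (by fun_prop) (by fun_prop)).measurableSet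
  have h := StronglyMeasurable.integral_prod_right (ν := volume)
    (f := fun x z => S.indicator (fun p => Λ p.2) (x, z))
    ((hΛ.comp_measurable measurable_snd).indicator hS)
  convert h using 2 with x
  rw [preferredMass, ← integral_indicator measurableSet_ball]
  rfl

end preferredMass

/-- `s_r(y)` of Equation (3), on the circle. -/
noncomputable def marketShare (Λ ℓ : UnitAddCircle → ℝ) (r : ℝ) (y : UnitAddCircle) : ℝ :=
  Λ y * ∫ x, ℓ x * frictionKernel r (preferredMass Λ x y)

section marketShare

variable {Λ ℓ : UnitAddCircle → ℝ} {y : UnitAddCircle} {r δ : ℝ}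

lemma integrable_mul_frictionKernel_preferredMass (hΛ : Continuous Λ) (hΛ0 : ∀ z, 0 ≤ Λ z)
    (hℓ : Continuous ℓ) (hr : 0 < r) (y : UnitAddCircle) :
    Integrable fun x => ℓ x * frictionKernel r (preferredMass Λ x y) := by
  obtain ⟨C, hC⟩ := isCompact_univ.exists_bound_of_continuousOn hℓ.continuousOn
  refine Integrable.of_bound (hℓ.aestronglyMeasurable.mul ((measurable_frictionKernel r).comp
    (stronglyMeasurable_preferredMass hΛ.stronglyMeasurable y).measurable).aestronglyMeasurable)
    (C * frictionKernel r 0) (.of_forall fun x => ?_)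
  have hM : 0 ≤ preferredMass Λ x y := by
    simpa using le_preferredMass (a := 0) (UnitAddCircle.integrable_of_continuous hΛ)
      fun z _ => hΛ0 z
  rw [norm_mul, Real.norm_of_nonneg (frictionKernel_nonneg hr.le _)]
  exact mul_le_mul (hC x (mem_univ x)) (frictionKernel_le_frictionKernel hr le_rfl hM)
    (frictionKernel_nonneg hr.le _) ((norm_nonneg _).trans (hC x (mem_univ x)))

lemma mul_frictionKernel_preferredMass_le {c a q C : ℝ} (hΛ : Integrable Λ) (hr : 0 < r)
    (hδ : 0 ≤ δ) (hc : 0 ≤ c) (hcΛ : ∀ z, c ≤ Λ z) (ha : 0 ≤ a) (haΛ : ∀ z ∈ ball y δ, a ≤ Λ z)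
    (hℓ0 : ∀ x, 0 ≤ ℓ x) (hℓC : ∀ x, ℓ x ≤ C) (hq : 0 ≤ q) (hℓq : ∀ x ∈ ball y δ, ℓ x ≤ q)
    (x : UnitAddCircle) :
    ℓ x * frictionKernel r (preferredMass Λ x y) ≤
      q * frictionKernel r (2 * a * dist x y) + C * frictionKernel r (c * δ) := by
  have hk := frictionKernel_nonneg hr.le
  by_cases hnear : dist x y < δ / 2
  · have hsub : ball x (dist x y) ⊆ ball y δ := ball_subset_ball' (by linarith)
    have hM := le_preferredMass hΛ fun z hz => haΛ z (hsub hz)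
    calc ℓ x * frictionKernel r (preferredMass Λ x y)
        ≤ q * frictionKernel r (2 * a * dist x y) :=
          mul_le_mul (hℓq x (mem_ball.mpr (by linarith)))
            (frictionKernel_le_frictionKernel hr (by positivity) hM) (hk _) hq
      _ ≤ _ := le_add_of_nonneg_right (mul_nonneg ((hℓ0 x).trans (hℓC x)) (hk _))
  · have hM := le_preferredMass (x := x) (y := y) hΛ fun z _ => hcΛ z
    calc ℓ x * frictionKernel r (preferredMass Λ x y) ≤ C * frictionKernel r (c * δ) :=
          mul_le_mul (hℓC x)
            (frictionKernel_le_frictionKernel hr (by positivity) (by nlinarith)) (hk _)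
            ((hℓ0 x).trans (hℓC x))
      _ ≤ _ := le_add_of_nonneg_left (mul_nonneg hq (hk _))

lemma le_mul_frictionKernel_preferredMass {b p : ℝ} (hΛ : Integrable Λ) (hr : 0 < r)
    (hδ : 0 ≤ δ) (hΛ0 : ∀ z, 0 ≤ Λ z) (hb : 0 ≤ b) (hbΛ : ∀ z ∈ ball y δ, Λ z ≤ b)
    (hℓ0 : ∀ x, 0 ≤ ℓ x) (hp : 0 ≤ p) (hpℓ : ∀ x ∈ ball y δ, p ≤ ℓ x) (x : UnitAddCircle) :
    p * frictionKernel r (2 * b * dist x y) - p * frictionKernel r (b * δ) ≤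
      ℓ x * frictionKernel r (preferredMass Λ x y) := by
  have hk := frictionKernel_nonneg hr.le
  have hM0 : 0 ≤ preferredMass Λ x y := by
    simpa using le_preferredMass (a := 0) hΛ fun z _ => hΛ0 z
  by_cases hnear : dist x y < δ / 2
  · have hsub : ball x (dist x y) ⊆ ball y δ := ball_subset_ball' (by linarith)
    have hM := preferredMass_le hΛ fun z hz => hbΛ z (hsub hz)
    calc p * frictionKernel r (2 * b * dist x y) - p * frictionKernel r (b * δ)
        ≤ p * frictionKernel r (2 * b * dist x y) := sub_le_self _ (mul_nonneg hp (hk _))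
      _ ≤ ℓ x * frictionKernel r (preferredMass Λ x y) :=
          mul_le_mul (hpℓ x (mem_ball.mpr (by linarith)))
            (frictionKernel_le_frictionKernel hr hM0 hM) (hk _) (hℓ0 x)
  · have hfar : frictionKernel r (2 * b * dist x y) ≤ frictionKernel r (b * δ) :=
      frictionKernel_le_frictionKernel hr (by positivity) (by nlinarith)
    calc p * frictionKernel r (2 * b * dist x y) - p * frictionKernel r (b * δ) ≤ 0 :=
          sub_nonpos.mpr (mul_le_mul_of_nonneg_left hfar hp)
      _ ≤ _ := mul_nonneg (hℓ0 x) (hk _)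

lemma marketShare_le {c a q C : ℝ} (hΛ : Continuous Λ) (hΛ0 : ∀ z, 0 < Λ z) (hℓ : Continuous ℓ)
    (hℓ0 : ∀ x, 0 ≤ ℓ x) (hr : 0 < r) (hδ : 0 ≤ δ) (hc : 0 ≤ c) (hcΛ : ∀ z, c ≤ Λ z)
    (ha : 0 < a) (haΛ : ∀ z ∈ ball y δ, a ≤ Λ z) (hℓC : ∀ x, ℓ x ≤ C) (hq : 0 ≤ q)
    (hℓq : ∀ x ∈ ball y δ, ℓ x ≤ q) :
    marketShare Λ ℓ r y ≤ Λ y * (q * (r + 1) / (r + a) + C * frictionKernel r (c * δ)) := by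
  have hK : Integrable fun x => frictionKernel r (2 * a * dist x y) :=
    UnitAddCircle.integrable_of_continuous
      (continuous_frictionKernel_comp hr (by fun_prop) fun x => by positivity)
  calc marketShare Λ ℓ r y
      ≤ Λ y * ∫ x, (q * frictionKernel r (2 * a * dist x y) + C * frictionKernel r (c * δ)) :=
        mul_le_mul_of_nonneg_left (integral_mono
          (integrable_mul_frictionKernel_preferredMass hΛ (fun z => (hΛ0 z).le) hℓ hr y)
          ((hK.const_mul q).add (integrable_const _))
          (mul_frictionKernel_preferredMass_le (UnitAddCircle.integrable_of_continuous hΛ) hr hδ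
            hc hcΛ ha.le haΛ hℓ0 hℓC hq hℓq)) (hΛ0 y).le
    _ = _ := by
        rw [integral_add (hK.const_mul q) (integrable_const _), integral_const_mul,
          integral_frictionKernel_dist hr ha]
        simp [mul_div_assoc]

lemma le_marketShare {b p : ℝ} (hΛ : Continuous Λ) (hΛ0 : ∀ z, 0 < Λ z) (hℓ : Continuous ℓ)
    (hℓ0 : ∀ x, 0 ≤ ℓ x) (hr : 0 < r) (hδ : 0 ≤ δ) (hb : 0 < b) (hbΛ : ∀ z ∈ ball y δ, Λ z ≤ b)
    (hp : 0 ≤ p) (hpℓ : ∀ x ∈ ball y δ, p ≤ ℓ x) :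
    Λ y * (p * (r + 1) / (r + b) - p * frictionKernel r (b * δ)) ≤ marketShare Λ ℓ r y := by
  have hK : Integrable fun x => frictionKernel r (2 * b * dist x y) :=
    UnitAddCircle.integrable_of_continuous
      (continuous_frictionKernel_comp hr (by fun_prop) fun x => by positivity)
  calc Λ y * (p * (r + 1) / (r + b) - p * frictionKernel r (b * δ))
      = Λ y * ∫ x, (p * frictionKernel r (2 * b * dist x y) - p * frictionKernel r (b * δ)) := by
        rw [integral_sub (hK.const_mul p) (integrable_const _), integral_const_mul,
          integral_frictionKernel_dist hr hb]
        simp [mul_div_assoc]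
    _ ≤ marketShare Λ ℓ r y :=
        mul_le_mul_of_nonneg_left (integral_mono ((hK.const_mul p).sub (integrable_const _))
          (integrable_mul_frictionKernel_preferredMass hΛ (fun z => (hΛ0 z).le) hℓ hr y)
          (le_mul_frictionKernel_preferredMass (UnitAddCircle.integrable_of_continuous hΛ) hr hδ
            (fun z => (hΛ0 z).le) hb.le hbΛ hℓ0 hp hpℓ)) (hΛ0 y).le

lemma eventually_marketShare_mem_Icc (hΛ : Continuous Λ) (hΛ0 : ∀ z, 0 < Λ z)
    (hℓ : Continuous ℓ) (hℓ0 : ∀ x, 0 ≤ ℓ x) (y : UnitAddCircle) {ε : ℝ} (hε : 0 < ε)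
    (hεΛ : ε < Λ y) :
    ∀ᶠ r in 𝓝[>] 0, marketShare Λ ℓ r y ∈
      Icc (Λ y * (max (ℓ y - ε) 0 / (Λ y + ε)) - ε) (Λ y * ((ℓ y + ε) / (Λ y - ε)) + ε) := by
  obtain ⟨z₀, -, hz₀⟩ := isCompact_univ.exists_isMinOn univ_nonempty hΛ.continuousOn
  obtain ⟨x₀, -, hx₀⟩ := isCompact_univ.exists_isMaxOn univ_nonempty hℓ.continuousOn
  obtain ⟨δ, hδ, hΛnear, hℓnear⟩ : ∃ δ > 0,
      (∀ z ∈ ball y δ, |Λ z - Λ y| < ε) ∧ ∀ x ∈ ball y δ, |ℓ x - ℓ y| < ε := by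
    obtain ⟨δΛ, hδΛ, hΛδ⟩ := Metric.continuousAt_iff.mp hΛ.continuousAt ε hε
    obtain ⟨δℓ, hδℓ, hℓδ⟩ := Metric.continuousAt_iff.mp hℓ.continuousAt ε hε
    exact ⟨min δΛ δℓ, lt_min hδΛ hδℓ, fun z hz => hΛδ (lt_min_iff.mp hz).1,
      fun x hx => hℓδ (lt_min_iff.mp hx).2⟩
  have hlo := ((tendsto_mul_div_add_mul_frictionKernel (A := Λ y + ε) (m := (Λ y + ε) * δ)
    (by linarith) (mul_pos (by linarith) hδ) (max (ℓ y - ε) 0) (-max (ℓ y - ε) 0)).const_mul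
    (Λ y)).mono_left (nhdsWithin_le_nhds (s := Ioi 0))
  have hhi := ((tendsto_mul_div_add_mul_frictionKernel (A := Λ y - ε) (m := Λ z₀ * δ)
    (by linarith) (mul_pos (hΛ0 z₀) hδ) (ℓ y + ε) (ℓ x₀)).const_mul (Λ y)).mono_left
    (nhdsWithin_le_nhds (s := Ioi 0))
  simp only [neg_mul, ← sub_eq_add_neg] at hlo
  filter_upwards [hlo.eventually_const_lt (sub_lt_self _ hε),
    hhi.eventually_lt_const (lt_add_of_pos_right _ hε), self_mem_nhdsWithin]
    with r hlor hhir hr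
  have hlow := le_marketShare hΛ hΛ0 hℓ hℓ0 hr hδ.le (b := Λ y + ε) (by linarith)
    (fun z hz => by linarith [(abs_lt.mp (hΛnear z hz)).2]) (p := max (ℓ y - ε) 0)
    (le_max_right _ _) fun x hx => max_le (by linarith [(abs_lt.mp (hℓnear x hx)).1]) (hℓ0 x)
  have hup := marketShare_le hΛ hΛ0 hℓ hℓ0 hr hδ.le (hΛ0 z₀).le (fun z => hz₀ (mem_univ z))
    (a := Λ y - ε) (by linarith) (fun z hz => by linarith [(abs_lt.mp (hΛnear z hz)).1])
    (fun x => hx₀ (mem_univ x)) (q := ℓ y + ε) (by linarith [hℓ0 y])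
    fun x hx => by linarith [(abs_lt.mp (hℓnear x hx)).2]
  exact ⟨hlor.le.trans hlow, hup.trans hhir.le⟩

theorem tendsto_marketShare (hΛ : Continuous Λ) (hΛ0 : ∀ z, 0 < Λ z) (hℓ : Continuous ℓ)
    (hℓ0 : ∀ x, 0 ≤ ℓ x) (y : UnitAddCircle) :
    Tendsto (fun r => marketShare Λ ℓ r y) (𝓝[>] 0) (𝓝 (ℓ y)) := by
  have hΛy := (hΛ0 y).ne'
  have hφ : ContinuousAt (fun ε => Λ y * ((ℓ y + ε) / (Λ y - ε)) + ε) 0 := by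
    fun_prop (disch := simpa using hΛy)
  have hψ : ContinuousAt (fun ε => Λ y * (max (ℓ y - ε) 0 / (Λ y + ε)) - ε) 0 := by
    fun_prop (disch := simpa using hΛy)
  refine tendsto_of_eventually_mem_Icc (l' := 𝓝[>] (0:ℝ))
    (by simpa [mul_div_cancel₀ _ hΛy] using
      hφ.tendsto.mono_left (nhdsWithin_le_nhds (s := Ioi 0)))
    (by simpa [max_eq_left (hℓ0 y), mul_div_cancel₀ _ hΛy] using
      hψ.tendsto.mono_left (nhdsWithin_le_nhds (s := Ioi 0))) ?_
  filter_upwards [self_mem_nhdsWithin, nhdsWithin_le_nhds (gt_mem_nhds (hΛ0 y))]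
    with ε hε hεΛ
  exact eventually_marketShare_mem_Icc hΛ hΛ0 hℓ hℓ0 y hε hεΛ

end marketShare

theorem size_tendsto_preferences_of_vanishing_frictions_general
    (lam ℓ : ℝ → ℝ)
    (hlam_cont : ContinuousOn lam (Set.Icc 0 1))
    (hlam_pos : ∀ y ∈ Set.Icc (0:ℝ) 1, 0 < lam y)
    (hlam_per : lam 0 = lam 1)
    (hl_cont : ContinuousOn ℓ (Set.Icc 0 1))
    (hl_nonneg : ∀ x ∈ Set.Icc (0:ℝ) 1, 0 ≤ ℓ x)
    (hl_per : ℓ 0 = ℓ 1)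
    (L : ℝ → ℝ → ℝ)
    (hL : ∀ x y, L x y =
      ∫ y' in (0:ℝ)..1,
        Set.indicator {y' : ℝ | circleDist x y' < circleDist x y} lam y')
    (s : ℝ → ℝ → ℝ)
    (hs : ∀ r y, s r y =
      lam y * ∫ x in (0:ℝ)..1, r * (r + 1) * ℓ x / (r + L x y) ^ 2) :
    ∀ y ∈ Set.Icc (0:ℝ) 1,
      Filter.Tendsto (fun r => s r y) (nhdsWithin 0 (Set.Ioi 0)) (nhds (ℓ y)) := by
  intro y hy
  have hlift {f : ℝ → ℝ} (hf : f 0 = f 1) {x : ℝ} (hx : x ∈ Icc (0:ℝ) 1) :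
      AddCircle.liftIoc 1 0 f x = f x :=
    AddCircle.liftIoc_coe_of_mem_Icc (by simpa using hf) (by simpa using hx)
  have hLc (x : ℝ) : L x y = preferredMass (AddCircle.liftIoc 1 0 lam) x y := by
    rw [hL, preferredMass, ← integral_indicator measurableSet_ball]
    refine intervalIntegral_eq_integral_unitAddCircle fun u hu => ?_
    simp only [indicator, mem_ofPred_eq, mem_ball, circleDist_eq_dist,
      dist_comm (u : UnitAddCircle), hlift hlam_per (Ioc_subset_Icc_self hu)]
  have hsc (r : ℝ) :
      s r y = marketShare (AddCircle.liftIoc 1 0 lam) (AddCircle.liftIoc 1 0 ℓ) r y := by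
    rw [hs, marketShare, hlift hlam_per hy]
    congr 1
    refine intervalIntegral_eq_integral_unitAddCircle fun x hx => ?_
    rw [hLc, hlift hl_per (Ioc_subset_Icc_self hx), frictionKernel]
    ring
  simp only [hsc]
  rw [← hlift hl_per hy]
  exact tendsto_marketShare
    (AddCircle.liftIoc_continuous (by simpa using hlam_per) (by simpa using hlam_cont))
    (AddCircle.liftIoc_mem fun x hx => hlam_pos x (Ioc_subset_Icc_self (by simpa using hx)))
    (AddCircle.liftIoc_continuous (by simpa using hl_per) (by simpa using hl_cont))
    (AddCircle.liftIoc_mem fun x hx => hl_nonneg x (Ioc_subset_Icc_self (by simpa using hx))) y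

/-- When frictions are negligible, the size of each firm converges to the mass of
agents that prefer it, even with non-constant meeting rates. -/
theorem size_tendsto_preferences_of_vanishing_frictions
    (lam ℓ : ℝ → ℝ)
    (hlam_cont : ContinuousOn lam (Set.Icc 0 1))
    (hlam_pos : ∀ y ∈ Set.Icc (0:ℝ) 1, 0 < lam y)
    (hlam_int : (∫ y in (0:ℝ)..1, lam y) = 1)
    (hlam_per : lam 0 = lam 1)
    (hl_cont : ContinuousOn ℓ (Set.Icc 0 1))
    (hl_nonneg : ∀ x ∈ Set.Icc (0:ℝ) 1, 0 ≤ ℓ x)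
    (hl_per : ℓ 0 = ℓ 1)
    (L : ℝ → ℝ → ℝ)
    (hL : ∀ x y, L x y =
      ∫ y' in (0:ℝ)..1,
        Set.indicator {y' : ℝ | circleDist x y' < circleDist x y} lam y')
    (s : ℝ → ℝ → ℝ)
    (hs : ∀ r y, s r y =
      lam y * ∫ x in (0:ℝ)..1, r * (r + 1) * ℓ x / (r + L x y) ^ 2) :
    ∀ y ∈ Set.Icc (0:ℝ) 1,
      Filter.Tendsto (fun r => s r y) (nhdsWithin 0 (Set.Ioi 0)) (nhds (ℓ y)) :=
  size_tendsto_preferences_of_vanishing_frictions_general lam ℓ hlam_cont hlam_pos hlam_per hl_cont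
    hl_nonneg hl_per L hL s hs
end

section
/- Theorem 1, part (i) (homogenizing regime): let α ∈ [0,1), μ > 0, λ_tot > 0, r_f = μ/λ_tot, and define λ_A(s) = ((1−α)/2 + α·s)·λ_tot, λ_B(s) = ((1−α)/2 + α·(1−s))·λ_tot, and p_a(s) = λ_tot·(μ+λ_A(s))·((μ+λ_B(s))·s − λ_A(s)·μ/λ_tot) / (λ_A(s)·λ_B(s)·(2μ+λ_tot)) for s ∈ [0,1] (the preference share consistent with equilibrium share s). If r_f ≥ (α − 1/2)/(1−α), then p_a(s) ≥ s for every s ∈ [1/2, 1]; equivalently, any equilibrium market share s_A ∈ [1/2,1] satisfies s_A ≤ p_a, so frictions have a homogenizing effect. -/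
/-!
Write `a = λ_A/λ_tot`, `b = λ_B/λ_tot` (so `a + b = 1`), `u = s - 1/2` and `r = μ/λ_tot`.
Clearing the positive denominator of `p_a(s)`, the gap `p_a(s) - s` has the sign of
`r · u · (r (1 - α) + (1/2 - α) + 2 α² u²)`. For `s ≥ 1/2` the first two factors are
nonnegative, and the friction condition `r ≥ (α - 1/2)/(1 - α)` is exactly what makes the
last factor nonnegative.
-/

open Set

lemma affine_share_pos {α s : ℝ} (hα : α ∈ Ico (0 : ℝ) 1) (hs : s ∈ Icc (0 : ℝ) 1) :
    0 < (1 - α) / 2 + α * s := by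
  obtain ⟨hα0, hα1⟩ := hα
  nlinarith [hs.1]

lemma friction_margin_nonneg {α μ L : ℝ} (hα : α < 1) (hL : 0 < L)
    (hcond : (α - 1/2) / (1 - α) ≤ μ / L) :
    0 ≤ μ * (1 - α) + L * (1/2 - α) := by
  rw [div_le_div_iff₀ (by linarith) hL] at hcond
  linarith

lemma equilibrium_gap_eq (α μ L s : ℝ) (hL : L ≠ 0) :
    L * (μ + ((1 - α) / 2 + α * s) * L) *
        ((μ + ((1 - α) / 2 + α * (1 - s)) * L) * s - ((1 - α) / 2 + α * s) * L * μ / L) -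
      s * (((1 - α) / 2 + α * s) * L * (((1 - α) / 2 + α * (1 - s)) * L) * (2 * μ + L)) =
    L * μ * (s - 1/2) * (μ * (1 - α) + L * (1/2 - α) + 2 * α ^ 2 * (s - 1/2) ^ 2 * L) := by
  field_simp
  ring

/-- Theorem 1, part (i) (homogenizing regime): if `r_f ≥ (α - 1/2)/(1 - α)`,
then the preference share consistent with any equilibrium share `s ∈ [1/2, 1]`
satisfies `p_a(s) ≥ s`: frictions have a homogenizing effect. -/
theorem homogenizing_regime
    (α μ lamtot rf : ℝ)
    (hα : α ∈ Set.Ico (0:ℝ) 1) (hμ : 0 < μ) (hlamtot : 0 < lamtot)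
    (hrf : rf = μ / lamtot)
    (lamA lamB pa : ℝ → ℝ)
    (hlamA : ∀ s, lamA s = ((1 - α) / 2 + α * s) * lamtot)
    (hlamB : ∀ s, lamB s = ((1 - α) / 2 + α * (1 - s)) * lamtot)
    (hpa : ∀ s, pa s =
      lamtot * (μ + lamA s) * ((μ + lamB s) * s - lamA s * μ / lamtot) /
        (lamA s * lamB s * (2 * μ + lamtot)))
    (hcond : (α - 1/2) / (1 - α) ≤ rf) :
    ∀ s ∈ Set.Icc (1/2 : ℝ) 1, s ≤ pa s := by
  rintro s ⟨hs_half, hs_one⟩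
  have hA := affine_share_pos hα (s := s) ⟨by linarith, hs_one⟩
  have hB := affine_share_pos hα (s := 1 - s) ⟨by linarith, by linarith⟩
  have hmargin := friction_margin_nonneg hα.2 hlamtot (hrf ▸ hcond)
  rw [hpa, hlamA, hlamB, le_div_iff₀ (by positivity), ← sub_nonneg,
    equilibrium_gap_eq α μ lamtot s hlamtot.ne']
  have hu : 0 ≤ s - 1/2 := by linarith
  exact mul_nonneg (by positivity) (add_nonneg hmargin (by positivity))
end

section
/- Sign of the derivative at the symmetric point: with α ∈ [0,1), μ > 0, λ_tot > 0, r_f = μ/λ_tot, λ_A(s) = ((1−α)/2 + α·s)·λ_tot, λ_B(s) = ((1−α)/2 + α·(1−s))·λ_tot, p_a(s) = λ_tot·(μ+λ_A(s))·((μ+λ_B(s))·s − λ_A(s)·μ/λ_tot)/(λ_A(s)·λ_B(s)·(2μ+λ_tot)), and f(s) = p_a(s) − s, the function f is differentiable at s = 1/2 and f'(1/2) has the same sign as r_f²(1−α) − r_f(α − 1/2) = r_f·((1−α)·r_f − (α − 1/2)); in particular f'(1/2) ≥ 0 if and only if r_f ≥ (α−1/2)/(1−α). -/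
/-!
At the symmetric point the preference share is `p_a(1/2) = 1/2`, so writing
`f = P / Q` with `P s = N s - s * Q s` (where `p_a = N / Q`) gives `P (1/2) = 0` and hence
`f'(1/2) = P'(1/2) / Q(1/2)`. Since `λ_A(1/2) = λ_B(1/2) = λ_tot / 2` and `λ_A' = -λ_B'`,
`Q(1/2) = λ_tot² (2μ + λ_tot) / 4 > 0` and `P'(1/2) = λ_tot³ r_f ((1 - α) r_f - (α - 1/2))`.
-/

theorem hasDerivAt_div_sub_id {N D : ℝ → ℝ} {N' D' a : ℝ} (hN : HasDerivAt N N' a)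
    (hD : HasDerivAt D D' a) (hDa : D a ≠ 0) (hfix : N a = a * D a) :
    HasDerivAt (fun s => N s / D s - s) ((N' - D a - a * D') / D a) a := by
  refine ((hN.fun_div hD hDa).fun_sub (hasDerivAt_id a)).congr_deriv ?_
  rw [hfix]
  field_simp
  ring

theorem hasDerivAt_prefShare_num {A B : ℝ → ℝ} {dA dB a : ℝ} (μ L : ℝ)
    (hA : HasDerivAt A dA a) (hB : HasDerivAt B dB a) :
    HasDerivAt (fun s => L * (μ + A s) * ((μ + B s) * s - A s * μ / L))
      (L * dA * ((μ + B a) * a - A a * μ / L) +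
        L * (μ + A a) * (dB * a + (μ + B a) - dA * μ / L)) a := by
  refine (((hA.const_add μ).const_mul L).fun_mul
    (((hB.const_add μ).fun_mul (hasDerivAt_id' a)).fun_sub
      ((hA.mul_const μ).div_const L))).congr_deriv ?_
  ring

theorem hasDerivAt_prefShare_sub_id_half {A B : ℝ → ℝ} {α μ L : ℝ} (hL : L ≠ 0)
    (hμL : 2 * μ + L ≠ 0) (hA : HasDerivAt A (α * L) (1 / 2))
    (hB : HasDerivAt B (-(α * L)) (1 / 2)) (hA_half : A (1 / 2) = L / 2)
    (hB_half : B (1 / 2) = L / 2) :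
    HasDerivAt (fun s => L * (μ + A s) * ((μ + B s) * s - A s * μ / L) /
        (A s * B s * (2 * μ + L)) - s)
      (4 * L / (2 * μ + L) * (μ / L * ((1 - α) * (μ / L) - (α - 1 / 2)))) (1 / 2) := by
  have hQ := (hA.fun_mul hB).mul_const (2 * μ + L)
  have hQ_half : A (1 / 2) * B (1 / 2) * (2 * μ + L) ≠ 0 := by
    rw [hA_half, hB_half]
    exact mul_ne_zero (by simp [hL]) hμL
  refine (hasDerivAt_div_sub_id (hasDerivAt_prefShare_num μ L hA hB) hQ hQ_half
    (by rw [hA_half, hB_half]; field_simp; ring)).congr_deriv ?_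
  rw [hA_half, hB_half]
  field_simp
  ring

theorem mul_sub_nonneg_iff_div_le {r b c : ℝ} (hr : 0 < r) (hc : 0 < c) :
    0 ≤ r * (c * r - b) ↔ b / c ≤ r := by
  rw [mul_nonneg_iff_of_pos_left hr, sub_nonneg, div_le_iff₀ hc, mul_comm]

theorem mul_neg_iff_of_pos_left {k t : ℝ} (hk : 0 < k) : k * t < 0 ↔ t < 0 := by
  rw [← neg_pos, ← mul_neg, mul_pos_iff_of_pos_left hk, neg_pos]

/-- Sign of the derivative of `f(s) = p_a(s) - s` at the symmetric point `s = 1/2`: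
`f` is differentiable at `1/2` and `f'(1/2)` has the same sign as
`r_f ((1-α) r_f - (α - 1/2))`; in particular `f'(1/2) ≥ 0 ↔ r_f ≥ (α-1/2)/(1-α)`. -/
theorem derivative_sign_at_half
    (α μ lamtot rf : ℝ)
    (hα : α ∈ Set.Ico (0:ℝ) 1) (hμ : 0 < μ) (hlamtot : 0 < lamtot)
    (hrf : rf = μ / lamtot)
    (lamA lamB pa f : ℝ → ℝ)
    (hlamA : ∀ s, lamA s = ((1 - α) / 2 + α * s) * lamtot)
    (hlamB : ∀ s, lamB s = ((1 - α) / 2 + α * (1 - s)) * lamtot)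
    (hpa : ∀ s, pa s =
      lamtot * (μ + lamA s) * ((μ + lamB s) * s - lamA s * μ / lamtot) /
        (lamA s * lamB s * (2 * μ + lamtot)))
    (hf : ∀ s, f s = pa s - s) :
    DifferentiableAt ℝ f (1/2) ∧
    (0 < deriv f (1/2) ↔ 0 < rf * ((1 - α) * rf - (α - 1/2))) ∧
    (deriv f (1/2) = 0 ↔ rf * ((1 - α) * rf - (α - 1/2)) = 0) ∧
    (deriv f (1/2) < 0 ↔ rf * ((1 - α) * rf - (α - 1/2)) < 0) ∧
    (0 ≤ deriv f (1/2) ↔ (α - 1/2) / (1 - α) ≤ rf) := by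
  have hA : HasDerivAt lamA (α * lamtot) (1 / 2) := by
    rw [funext hlamA]
    simpa using (((hasDerivAt_id _).const_mul α).const_add _).mul_const lamtot
  have hB : HasDerivAt lamB (-(α * lamtot)) (1 / 2) := by
    rw [funext hlamB]
    simpa using ((((hasDerivAt_id _).const_sub 1).const_mul α).const_add _).mul_const lamtot
  have hf_eq : f = fun s => lamtot * (μ + lamA s) * ((μ + lamB s) * s - lamA s * μ / lamtot) /
      (lamA s * lamB s * (2 * μ + lamtot)) - s := funext fun s => by rw [hf, hpa]
  have hder := hasDerivAt_prefShare_sub_id_half (α := α) hlamtot.ne' (by positivity) hA hB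
    (by rw [hlamA]; ring) (by rw [hlamB]; ring)
  rw [← hrf, ← hf_eq] at hder
  have hk : 0 < 4 * lamtot / (2 * μ + lamtot) := by positivity
  have hrf_pos : 0 < rf := hrf ▸ div_pos hμ hlamtot
  rw [hder.deriv]
  exact ⟨hder.differentiableAt, mul_pos_iff_of_pos_left hk, mul_eq_zero_iff_left hk.ne',
    mul_neg_iff_of_pos_left hk, (mul_nonneg_iff_of_pos_left hk).trans
      (mul_sub_nonneg_iff_div_le hrf_pos (sub_pos.2 hα.2))⟩
end

section
/- Solution of the steady-state integral equation for the match density (Annex B): let μ > 0, c > 0, let λ : [0,1] → ℝ be continuous and strictly positive, define G(s) = μ + ∫_s¹ λ(t) dt for s ∈ [0,1], and suppose χ : [0,1] → ℝ is continuous and satisfies G(s)·χ(s) = λ(s)·(c + ∫₀^s χ(t) dt) for all s ∈ [0,1]. Then χ(s) = c·G(0)·λ(s)/G(s)² for all s ∈ [0,1] (where G(0) = μ + ∫₀¹ λ). -/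
/-! Since `G' = -λ`, the integral equation says precisely that `s ↦ G(s)·(c + ∫₀ˢ χ)` has zero
derivative on `[0,1]`, so it equals its value `G(0)·c` at `s = 0`. Substituting this back into the
equation and dividing by `G(s) > 0` gives the closed form. -/

open Set

section Primitive

variable {E : Type*} [NormedAddCommGroup E] [NormedSpace ℝ E] [CompleteSpace E]
  {f : ℝ → E} {a b c x : ℝ}

theorem ContinuousOn.integral_hasDerivWithinAt_right_Icc (hf : ContinuousOn f (Icc a b))
    (hc : c ∈ Icc a b) (hx : x ∈ Icc a b) :
    HasDerivWithinAt (fun u => ∫ t in c..u, f t) (f x) (Icc a b) x := by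
  have : Fact (x ∈ Icc a b) := ⟨hx⟩
  exact intervalIntegral.integral_hasDerivWithinAt_right
    (hf.mono (uIcc_subset_Icc hc hx)).intervalIntegrable
    (hf.stronglyMeasurableAtFilter_nhdsWithin measurableSet_Icc x) (hf x hx)

theorem ContinuousOn.integral_hasDerivWithinAt_left_Icc (hf : ContinuousOn f (Icc a b))
    (hc : c ∈ Icc a b) (hx : x ∈ Icc a b) :
    HasDerivWithinAt (fun u => ∫ t in u..c, f t) (-f x) (Icc a b) x := by
  simpa only [intervalIntegral.integral_symm c] using
    (hf.integral_hasDerivWithinAt_right_Icc hc hx).fun_neg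

end Primitive

theorem Convex.is_const_of_hasDerivWithinAt_zero {E : Type*} [NormedAddCommGroup E]
    [NormedSpace ℝ E] {f : ℝ → E} {s : Set ℝ} {x y : ℝ} (hs : Convex ℝ s)
    (hf : ∀ z ∈ s, HasDerivWithinAt f 0 s z) (hx : x ∈ s) (hy : y ∈ s) : f x = f y := by
  have := hs.norm_image_sub_le_of_norm_hasDerivWithin_le hf (fun _ _ => norm_zero.le) hx hy
  rw [zero_mul, norm_le_zero_iff, sub_eq_zero] at this
  exact this.symm

theorem mul_add_integral_eq_of_integral_equation {G lam χ : ℝ → ℝ} {a b c : ℝ}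
    (hG : ∀ s ∈ Icc a b, HasDerivWithinAt G (-lam s) (Icc a b) s)
    (hχ : ContinuousOn χ (Icc a b))
    (heq : ∀ s ∈ Icc a b, G s * χ s = lam s * (c + ∫ t in a..s, χ t)) :
    ∀ s ∈ Icc a b, G s * (c + ∫ t in a..s, χ t) = G a * c := by
  intro s hs
  have ha : a ∈ Icc a b := left_mem_Icc.2 (hs.1.trans hs.2)
  have hderiv : ∀ x ∈ Icc a b,
      HasDerivWithinAt (fun u => G u * (c + ∫ t in a..u, χ t)) 0 (Icc a b) x := by
    intro x hx
    have := (hG x hx).mul ((hχ.integral_hasDerivWithinAt_right_Icc ha hx).const_add c)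
    rwa [neg_mul, ← heq x hx, neg_add_cancel] at this
  simpa using (convex_Icc a b).is_const_of_hasDerivWithinAt_zero hderiv hs ha

theorem match_density_closed_form_general (μ c : ℝ) (hμ : 0 < μ)
    (lam : ℝ → ℝ)
    (hlam_cont : ContinuousOn lam (Set.Icc 0 1))
    (hlam_pos : ∀ s ∈ Set.Icc (0:ℝ) 1, 0 < lam s)
    (G : ℝ → ℝ) (hG : ∀ s, G s = μ + ∫ t in s..(1:ℝ), lam t)
    (χ : ℝ → ℝ) (hχ_cont : ContinuousOn χ (Set.Icc 0 1))
    (heq : ∀ s ∈ Set.Icc (0:ℝ) 1,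
      G s * χ s = lam s * (c + ∫ t in (0:ℝ)..s, χ t)) :
    ∀ s ∈ Set.Icc (0:ℝ) 1, χ s = c * G 0 * lam s / (G s) ^ 2 := by
  have hG_eq : G = fun s => μ + ∫ t in s..(1:ℝ), lam t := funext hG
  have hG_deriv : ∀ s ∈ Icc (0:ℝ) 1, HasDerivWithinAt G (-lam s) (Icc 0 1) s := fun s hs =>
    hG_eq ▸ (hlam_cont.integral_hasDerivWithinAt_left_Icc
      (right_mem_Icc.2 zero_le_one) hs).const_add μ
  intro s hs
  have hG_pos : 0 < G s := by
    have : 0 ≤ ∫ t in s..(1:ℝ), lam t := intervalIntegral.integral_nonneg hs.2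
      fun u hu => (hlam_pos u ⟨hs.1.trans hu.1, hu.2⟩).le
    rw [hG s]
    linarith
  have hproduct := mul_add_integral_eq_of_integral_equation hG_deriv hχ_cont heq s hs
  rw [eq_div_iff (pow_ne_zero 2 hG_pos.ne')]
  linear_combination G s * heq s hs + lam s * hproduct

/-- Solution of the steady-state integral equation for the match density
(Annex B): if `G(s) χ(s) = λ(s) (c + ∫₀ˢ χ)` with `G(s) = μ + ∫ₛ¹ λ`,
then `χ(s) = c G(0) λ(s) / G(s)²`. -/
theorem match_density_closed_form (μ c : ℝ) (hμ : 0 < μ) (hc : 0 < c)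
    (lam : ℝ → ℝ)
    (hlam_cont : ContinuousOn lam (Set.Icc 0 1))
    (hlam_pos : ∀ s ∈ Set.Icc (0:ℝ) 1, 0 < lam s)
    (G : ℝ → ℝ) (hG : ∀ s, G s = μ + ∫ t in s..(1:ℝ), lam t)
    (χ : ℝ → ℝ) (hχ_cont : ContinuousOn χ (Set.Icc 0 1))
    (heq : ∀ s ∈ Set.Icc (0:ℝ) 1,
      G s * χ s = lam s * (c + ∫ t in (0:ℝ)..s, χ t)) :
    ∀ s ∈ Set.Icc (0:ℝ) 1, χ s = c * G 0 * lam s / (G s) ^ 2 :=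
  match_density_closed_form_general μ c hμ lam hlam_cont hlam_pos G hG χ hχ_cont heq
end
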